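/- arXiv:1207.1793 — 4 statements merged into one kernel-verified Lean document; each statement's English description precedes it below -/
import Mathlib

section
/- Let a, b, c be nonzero vectors in ℝ³ with a + b + c = 0 (the oriented sides of a triangle with vertices x, y, z, i.e. a = z - y, b = x - z, c = y - x). If the normalized sum a/|a| + b/|b| + c/|c| = 0, then |a| = |b| = |c| (the triangle is equilateral). -/
open scoped InnerProductSpace

noncomputable section

abbrev E3 := EuclideanSpace ℝ (Fin 3)

/-- The cross product on ℝ³. -/
def cross3 (a b : E3) : E3 :=
  WithLp.toLp 2 ![a 1 * b 2 - a 2 * b 1, a 2 * b 0 - a 0 * b 2, a 0 * b 1 - a 1 * b 0]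

/-! Three unit vectors `u, v, w` with zero sum make pairwise angles of `2π/3`, i.e. `⟪u, v⟫ = -1/2`.
Writing the sides as `a = ‖a‖ • u`, `b = ‖b‖ • v`, `c = ‖c‖ • w`, pairing
`‖a‖ • u + ‖b‖ • v + ‖c‖ • w = 0` with `u` and with `v` gives `2‖a‖ = ‖b‖ + ‖c‖` and
`2‖b‖ = ‖a‖ + ‖c‖`, which force the three lengths to agree. -/

section UnitVectors

variable {V : Type*} [NormedAddCommGroup V] [InnerProductSpace ℝ V] {u v w : V}

lemma inner_eq_neg_half_of_add_add_eq_zero (hu : ‖u‖ = 1) (hv : ‖v‖ = 1) (hw : ‖w‖ = 1)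
    (h : u + v + w = 0) : ⟪u, v⟫_ℝ = -1 / 2 := by
  have h2 := norm_add_sq_real u v
  rw [eq_neg_of_add_eq_zero_left h, norm_neg, hu, hv, hw] at h2
  linarith

lemma eq_of_smul_add_smul_add_smul_eq_zero (hu : ‖u‖ = 1) (hv : ‖v‖ = 1) (hw : ‖w‖ = 1)
    (h : u + v + w = 0) {α β γ : ℝ} (hαβγ : α • u + β • v + γ • w = 0) : α = β ∧ β = γ := by
  have huv := inner_eq_neg_half_of_add_add_eq_zero hu hv hw h
  have huw := inner_eq_neg_half_of_add_add_eq_zero hu hw hv (by rw [← h]; abel)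
  have hvw := inner_eq_neg_half_of_add_add_eq_zero hv hw hu (by rw [← h]; abel)
  have hvu : ⟪v, u⟫_ℝ = -1 / 2 := by rw [real_inner_comm, huv]
  have pair (x : V) : α * ⟪x, u⟫_ℝ + β * ⟪x, v⟫_ℝ + γ * ⟪x, w⟫_ℝ = 0 := by
    simpa only [inner_add_right, real_inner_smul_right, inner_zero_right]
      using congrArg (⟪x, ·⟫_ℝ) hαβγ
  have hu' := pair u
  have hv' := pair v
  rw [real_inner_self_eq_norm_sq, hu, huv, huw] at hu'
  rw [real_inner_self_eq_norm_sq, hv, hvu, hvw] at hv'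
  constructor <;> linarith

end UnitVectors

theorem stmt0 (a b c : E3) (ha : a ≠ 0) (hb : b ≠ 0) (hc : c ≠ 0)
    (hsum : a + b + c = 0)
    (hunit : ‖a‖⁻¹ • a + ‖b‖⁻¹ • b + ‖c‖⁻¹ • c = 0) :
    ‖a‖ = ‖b‖ ∧ ‖b‖ = ‖c‖ := by
  have unit {x : E3} (hx : x ≠ 0) : ‖‖x‖⁻¹ • x‖ = 1 := norm_smul_inv_norm hx
  refine eq_of_smul_add_smul_add_smul_eq_zero (unit ha) (unit hb) (unit hc) hunit ?_
  simpa only [smul_inv_smul₀ (norm_ne_zero_iff.mpr ha), smul_inv_smul₀ (norm_ne_zero_iff.mpr hb),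
    smul_inv_smul₀ (norm_ne_zero_iff.mpr hc)] using hsum
end
end

section
/- Let x, y, z be three distinct points in ℝ³ with side vectors a = z - y, b = x - z, c = y - x. Then the vector F(x,y,z) = a/|a| + b/|b| + c/|c| + (b×c)/(|b||c|) + (c×a)/(|c||a|) + (a×b)/(|a||b|) is nonzero. -/
/-!
Since `a + b + c = 0`, the three cross products `b × c`, `c × a`, `a × b` all equal
`n = a × b`, so `F = u + k n` with `u = a/|a| + b/|b| + c/|c|` and `k > 0`. As `n` is orthogonal
to `a`, `b`, `c`, pairing `F = 0` with `n` gives `n = 0`, and then `u = 0`. Three unit vectors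
summing to zero have pairwise inner products `-1/2`, so `⟪a, b⟫ = -|a||b|/2`, and
Lagrange's identity gives `|a × b|² = |a|²|b|² - ⟪a, b⟫² = 3/4 |a|²|b|² > 0`, a contradiction.
-/

open scoped InnerProductSpace

noncomputable section

/-- The key map F on configurations of three distinct points, defined from the
side vectors a = z - y, b = x - z, c = y - x of the triangle xyz. -/
def Fkey (x y z : E3) : E3 :=
  (‖z - y‖⁻¹ • (z - y) + ‖x - z‖⁻¹ • (x - z) + ‖y - x‖⁻¹ • (y - x)) +
    ((‖x - z‖ * ‖y - x‖)⁻¹ • cross3 (x - z) (y - x) +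
      (‖y - x‖ * ‖z - y‖)⁻¹ • cross3 (y - x) (z - y) +
      (‖z - y‖ * ‖x - z‖)⁻¹ • cross3 (z - y) (x - z))

open WithLp Matrix

lemma cross3_eq_crossProduct (a b : E3) : cross3 a b = toLp 2 (ofLp a ⨯₃ ofLp b) := rfl

lemma inner_eq_dotProduct_ofLp (a b : E3) : ⟪a, b⟫_ℝ = ofLp a ⬝ᵥ ofLp b := by
  rw [EuclideanSpace.inner_eq_star_dotProduct, star_trivial, dotProduct_comm]

lemma inner_cross3_self_left (a b : E3) : ⟪a, cross3 a b⟫_ℝ = 0 := by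
  rw [cross3_eq_crossProduct, inner_eq_dotProduct_ofLp, dot_self_cross]

lemma inner_cross3_self_right (a b : E3) : ⟪b, cross3 a b⟫_ℝ = 0 := by
  rw [cross3_eq_crossProduct, inner_eq_dotProduct_ofLp, dot_cross_self]

lemma norm_cross3_sq (a b : E3) : ‖cross3 a b‖ ^ 2 = ‖a‖ ^ 2 * ‖b‖ ^ 2 - ⟪a, b⟫_ℝ ^ 2 := by
  simp only [← real_inner_self_eq_norm_sq, inner_eq_dotProduct_ofLp, cross3_eq_crossProduct,
    cross_dot_cross]
  rw [dotProduct_comm (ofLp b) (ofLp a)]; ring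

lemma cross3_cyclic {a b c : E3} (h : a + b + c = 0) :
    cross3 b c = cross3 a b ∧ cross3 c a = cross3 a b := by
  obtain rfl := eq_neg_of_add_eq_zero_right h
  simp only [cross3_eq_crossProduct, ofLp_neg, ofLp_add, map_neg, map_add, LinearMap.add_apply,
    LinearMap.neg_apply, cross_self]
  exact ⟨by rw [← cross_anticomm, add_zero, neg_neg],
    by rw [← cross_anticomm, zero_add, neg_neg]⟩

lemma inner_eq_neg_half_of_normalized_sum_eq_zero {V : Type*} [NormedAddCommGroup V]
    [InnerProductSpace ℝ V] {a b c : V} (ha : a ≠ 0) (hb : b ≠ 0) (hc : c ≠ 0)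
    (h : ‖a‖⁻¹ • a + ‖b‖⁻¹ • b + ‖c‖⁻¹ • c = 0) : ⟪a, b⟫_ℝ = -(‖a‖ * ‖b‖) / 2 := by
  have hunit {v : V} (hv : v ≠ 0) : ‖‖v‖⁻¹ • v‖ = 1 := norm_smul_inv_norm (𝕜 := ℝ) hv
  have hab : ‖‖a‖⁻¹ • a + ‖b‖⁻¹ • b‖ = 1 := by
    rw [eq_neg_of_add_eq_zero_left h, norm_neg, hunit hc]
  have hsq := norm_add_sq_real (‖a‖⁻¹ • a) (‖b‖⁻¹ • b)
  rw [hab, hunit ha, hunit hb, real_inner_smul_left, real_inner_smul_right] at hsq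
  have := norm_pos_iff.2 ha
  have := norm_pos_iff.2 hb
  field_simp at hsq
  linarith

lemma Fkey_eq (x y z : E3) :
    Fkey x y z = (‖z - y‖⁻¹ • (z - y) + ‖x - z‖⁻¹ • (x - z) + ‖y - x‖⁻¹ • (y - x)) +
      ((‖x - z‖ * ‖y - x‖)⁻¹ + (‖y - x‖ * ‖z - y‖)⁻¹ + (‖z - y‖ * ‖x - z‖)⁻¹) •
        cross3 (z - y) (x - z) := by
  obtain ⟨hbc, hca⟩ := cross3_cyclic (a := z - y) (b := x - z) (c := y - x) (by abel)
  rw [Fkey, hbc, hca, add_smul, add_smul]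

lemma normalized_sum_add_smul_cross3_ne_zero {a b c : E3} (ha : a ≠ 0) (hb : b ≠ 0)
    (hc : c ≠ 0) (habc : a + b + c = 0) {k : ℝ} (hk : 0 < k) :
    ‖a‖⁻¹ • a + ‖b‖⁻¹ • b + ‖c‖⁻¹ • c + k • cross3 a b ≠ 0 := by
  intro hF
  have han := inner_cross3_self_left a b
  have hbn := inner_cross3_self_right a b
  have hcross := norm_cross3_sq a b
  set n := cross3 a b
  have hcn : ⟪c, n⟫_ℝ = 0 := by
    rw [eq_neg_of_add_eq_zero_right habc, inner_neg_left, inner_add_left, han, hbn, add_zero,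
      neg_zero]
  have hn : n = 0 := by
    have h := congrArg (⟪·, n⟫_ℝ) hF
    simp only [inner_add_left, real_inner_smul_left, han, hbn, hcn, real_inner_self_eq_norm_sq,
      inner_zero_left] at h
    simpa [hk.ne'] using h
  rw [hn, smul_zero, add_zero] at hF
  rw [hn, inner_eq_neg_half_of_normalized_sum_eq_zero ha hb hc hF, norm_zero] at hcross
  have := mul_pos (norm_pos_iff.2 ha) (norm_pos_iff.2 hb)
  nlinarith

theorem stmt2 (x y z : E3) (hxy : x ≠ y) (hyz : y ≠ z) (hxz : x ≠ z) :
    Fkey x y z ≠ 0 := by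
  have ha := norm_sub_pos_iff.2 hyz.symm
  have hb := norm_sub_pos_iff.2 hxz
  have hc := norm_sub_pos_iff.2 hxy.symm
  rw [Fkey_eq]
  exact normalized_sum_add_smul_cross3_ne_zero (sub_ne_zero.2 hyz.symm) (sub_ne_zero.2 hxz)
    (sub_ne_zero.2 hxy.symm) (by abel)
    (add_pos (add_pos (inv_pos.2 (mul_pos hb hc)) (inv_pos.2 (mul_pos hc ha)))
      (inv_pos.2 (mul_pos ha hb)))
end
end

section
/- Let a, b be purely imaginary quaternions with a, b, a+b all nonzero. Then Im((h(-a) - 1)·conj(h(b) - 1)) = C·(|a|²b + |b|²a + a×b), where C = 4/((1+|a|²)(1+|b|²)) > 0. In particular this imaginary part is a positive scalar multiple of |a|²b + |b|²a + a×b. -/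
/-!
Since `h(q) - 1 = 2 (q - |q|²) / (1 + |q|²)` and `conj b = -b` for imaginary `b`, the product
`(h(-a) - 1) · conj(h(b) - 1)` equals `C · (|a|² + a)(|b|² + b)`. For quaternions with real parts
`r, s` and imaginary parts `u, v`, the imaginary part of the product is `r v + s u + u × v`.
-/

open scoped InnerProductSpace

noncomputable section

/-- The imaginary part of a quaternion, as a vector in ℝ³. -/
def im3 (q : Quaternion ℝ) : E3 := WithLp.toLp 2 ![q.imI, q.imJ, q.imK]

/-- The quaternion with given real part and imaginary part. -/
def mkQ (r : ℝ) (v : E3) : Quaternion ℝ := ⟨r, v 0, v 1, v 2⟩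

/-- Inverse stereographic projection from -1, applied to a quaternion q. -/
def hmap (q : Quaternion ℝ) : Quaternion ℝ :=
  (((1 - ‖q‖ ^ 2) / (1 + ‖q‖ ^ 2) : ℝ) : Quaternion ℝ) + ((2 / (1 + ‖q‖ ^ 2) : ℝ)) • q

lemma im3_smul (c : ℝ) (q : Quaternion ℝ) : im3 (c • q) = c • im3 q := by
  ext i; fin_cases i <;> simp [im3]

lemma im3_coe_add (r : ℝ) (q : Quaternion ℝ) : im3 (r + q) = im3 q := by
  ext i; fin_cases i <;> simp [im3]

lemma im3_mul (p q : Quaternion ℝ) :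
    im3 (p * q) = p.re • im3 q + q.re • im3 p + cross3 (im3 p) (im3 q) := by
  ext i
  fin_cases i <;>
  · simp only [im3, cross3, Quaternion.imI_mul, Quaternion.imJ_mul, Quaternion.imK_mul,
      Fin.zero_eta, Fin.mk_one, Fin.reduceFinMk, Fin.isValue, Matrix.cons_val_zero,
      Matrix.cons_val_one, Matrix.cons_val, PiLp.add_apply, PiLp.smul_apply, smul_eq_mul]
    ring

lemma hmap_sub_one (q : Quaternion ℝ) :
    hmap q - 1 = (2 / (1 + ‖q‖ ^ 2)) • (q - (‖q‖ ^ 2 : ℝ)) := by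
  have hre : (1 - ‖q‖ ^ 2) / (1 + ‖q‖ ^ 2) - 1 = -(2 / (1 + ‖q‖ ^ 2) * ‖q‖ ^ 2) := by
    field_simp; ring
  simp only [hmap, ← Quaternion.coe_mul_eq_smul]
  calc _ = (((1 - ‖q‖ ^ 2) / (1 + ‖q‖ ^ 2) - 1 : ℝ) : Quaternion ℝ)
          + (2 / (1 + ‖q‖ ^ 2) : ℝ) * q := by
        push_cast; abel
    _ = _ := by rw [hre]; push_cast; noncomm_ring

lemma hmap_neg_sub_one_mul_star_hmap_sub_one {a b : Quaternion ℝ} (hb : b.re = 0) :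
    (hmap (-a) - 1) * star (hmap b - 1) =
      (4 / ((1 + ‖a‖ ^ 2) * (1 + ‖b‖ ^ 2))) • (((‖a‖ ^ 2 : ℝ) + a) * ((‖b‖ ^ 2 : ℝ) + b)) := by
  rw [hmap_sub_one, hmap_sub_one, norm_neg, Quaternion.star_smul, star_sub,
    Quaternion.star_eq_neg.mpr hb, Quaternion.star_coe, smul_mul_smul_comm]
  congr 1
  · field_simp; ring
  · noncomm_ring

theorem stmt11_general (a b : Quaternion ℝ) (ha0 : a.re = 0) (hb0 : b.re = 0) :
    0 < 4 / ((1 + ‖a‖ ^ 2) * (1 + ‖b‖ ^ 2)) ∧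
    im3 ((hmap (-a) - 1) * star (hmap b - 1)) =
      (4 / ((1 + ‖a‖ ^ 2) * (1 + ‖b‖ ^ 2))) •
        (‖a‖ ^ 2 • im3 b + ‖b‖ ^ 2 • im3 a + cross3 (im3 a) (im3 b)) := by
  refine ⟨by positivity, ?_⟩
  rw [hmap_neg_sub_one_mul_star_hmap_sub_one hb0, im3_smul, im3_mul, im3_coe_add, im3_coe_add]
  simp only [Quaternion.re_add, Quaternion.re_coe, ha0, hb0, add_zero]

theorem stmt11 (a b : Quaternion ℝ) (ha0 : a.re = 0) (hb0 : b.re = 0)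
    (ha : a ≠ 0) (hb : b ≠ 0) (hab : a + b ≠ 0) :
    0 < 4 / ((1 + ‖a‖ ^ 2) * (1 + ‖b‖ ^ 2)) ∧
    im3 ((hmap (-a) - 1) * star (hmap b - 1)) =
      (4 / ((1 + ‖a‖ ^ 2) * (1 + ‖b‖ ^ 2))) •
        (‖a‖ ^ 2 • im3 b + ‖b‖ ^ 2 • im3 a + cross3 (im3 a) (im3 b)) :=
  stmt11_general a b ha0 hb0
end
end

section
/- The key map F: Conf₃(ℝ³) → ℝ³ \ {0}, F(x,y,z) = a/|a| + b/|b| + c/|c| + (b×c)/(|b||c|) + (c×a)/(|c||a|) + (a×b)/(|a||b|) with a = z-y, b = x-z, c = y-x, is equivariant under orientation-preserving isometries of ℝ³: for any φ = (translation by v) ∘ (rotation R), F(φ(x), φ(y), φ(z)) = R(F(x,y,z)). -/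
open scoped InnerProductSpace

noncomputable section

/- A rotation preserves the cross product, because ⟪a × b, c⟫ is the determinant of
(a, b, c) and a rotation has determinant one. The side vectors of the triangle are
unchanged by translations and are rotated by R, while their norms are preserved; so every
term of F is carried to its image under R. -/

lemma inner_cross3_eq_det (a b c : E3) :
    ⟪cross3 a b, c⟫_ℝ = (PiLp.basisFun 2 ℝ (Fin 3)).det ![a, b, c] := by
  simp [cross3, Module.Basis.det_apply, Module.Basis.toMatrix_apply, Matrix.det_fin_three,
    PiLp.inner_apply, Fin.sum_univ_three]
  ring

lemma cross3_map (R : E3 ≃ₗᵢ[ℝ] E3)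
    (hdet : LinearMap.det (R.toLinearEquiv : E3 →ₗ[ℝ] E3) = 1) (a b : E3) :
    cross3 (R a) (R b) = R (cross3 a b) := by
  refine ext_inner_right ℝ fun u => ?_
  obtain ⟨c, rfl⟩ := R.surjective u
  have hcomp : ![R a, R b, R c] = R ∘ ![a, b, c] := by
    ext1 i; fin_cases i <;> rfl
  calc ⟪cross3 (R a) (R b), R c⟫_ℝ
      = LinearMap.det (R.toLinearEquiv : E3 →ₗ[ℝ] E3) *
          (PiLp.basisFun 2 ℝ (Fin 3)).det ![a, b, c] := by
        rw [inner_cross3_eq_det, hcomp]; exact Module.Basis.det_comp _ _ _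
    _ = ⟪R (cross3 a b), R c⟫_ℝ := by
        rw [hdet, one_mul, R.inner_map_map, inner_cross3_eq_det]

lemma Fkey_add_right (x y z v : E3) : Fkey (x + v) (y + v) (z + v) = Fkey x y z := by
  simp only [Fkey, add_sub_add_right_eq_sub]

lemma Fkey_map (R : E3 ≃ₗᵢ[ℝ] E3)
    (hdet : LinearMap.det (R.toLinearEquiv : E3 →ₗ[ℝ] E3) = 1) (x y z : E3) :
    Fkey (R x) (R y) (R z) = R (Fkey x y z) := by
  simp only [Fkey, ← map_sub, R.norm_map, cross3_map R hdet, ← map_smul, ← map_add]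

theorem stmt14_general (R : E3 ≃ₗᵢ[ℝ] E3)
    (hdet : LinearMap.det (R.toLinearEquiv : E3 →ₗ[ℝ] E3) = 1) (v : E3)
    (x y z : E3) :
    Fkey (R x + v) (R y + v) (R z + v) = R (Fkey x y z) := by
  rw [Fkey_add_right, Fkey_map R hdet]

theorem stmt14 (R : E3 ≃ₗᵢ[ℝ] E3)
    (hdet : LinearMap.det (R.toLinearEquiv : E3 →ₗ[ℝ] E3) = 1) (v : E3)
    (x y z : E3) (hxy : x ≠ y) (hyz : y ≠ z) (hxz : x ≠ z) :
    Fkey (R x + v) (R y + v) (R z + v) = R (Fkey x y z) :=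
  stmt14_general R hdet v x y z
end
end
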